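/- arXiv:2506.15334 — 8 statements merged into one kernel-verified Lean document; each statement's English description precedes it below -/
import Mathlib

section
/- For every positive integer N, the rational-valued sequence (g_N(δ))_{δ ∈ ℕ, δ ≥ 2} defined by g_N(δ) := ((N·δ + 1)·(δ - 1)^(N-1) + (-1)^N·(δ + 1)) / (δ^2·(δ - 1)^(N-1)) is non-increasing, i.e. g_N(δ + 1) ≤ g_N(δ) for every integer δ ≥ 2. -/
/-- The sequence `g_N(δ)` from the paper, as a rational number, for `N ≥ 1` and `δ ≥ 2`. -/
def g (N δ : ℕ) : ℚ :=
  (((N : ℚ) * δ + 1) * ((δ : ℚ) - 1) ^ (N - 1) + (-1) ^ N * ((δ : ℚ) + 1)) /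
    ((δ : ℚ) ^ 2 * ((δ : ℚ) - 1) ^ (N - 1))

/-!
Write `g_N(δ) = (Nδ + 1)/δ² + (-1)^N (δ + 1)/(δ² (δ - 1)^k)` with `k = N - 1`. Both parts are
decreasing in `δ`, which settles even `N`. For odd `N` the drop of the second part over one step
must not exceed the drop of the first. For `k = 0` the two parts coincide, for `k = 2` the claim
reduces to `δ + 1 ≤ 3 (δ - 1)²`, and passing from `k` to `k + 1` (for `k ≥ 1`) adds exactly
`1/δ - 1/(δ + 1)` to the drop of the first part but at most that much to the drop of the second.
-/

section

variable {K : Type*} [Field K]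

def gLead (N : ℕ) (x : K) : K := (N * x + 1) / x ^ 2

def gTail (k : ℕ) (x : K) : K := (x + 1) / (x ^ 2 * (x - 1) ^ k)

theorem gTail_zero (x : K) : gTail 0 x = gLead 1 x := by
  simp [gTail, gLead]

theorem gLead_succ (N : ℕ) {x : K} (hx : x ≠ 0) : gLead (N + 1) x = gLead N x + 1 / x := by
  unfold gLead
  push_cast
  field_simp
  ring

theorem gTail_succ (k : ℕ) (x : K) : gTail (k + 1) x = gTail k x / (x - 1) := by
  rw [gTail, gTail, pow_succ (x - 1), ← mul_assoc, div_div]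

variable [LinearOrder K] [IsStrictOrderedRing K]

theorem gLead_add_one_le (N : ℕ) {x : K} (hx : 0 < x) : gLead N (x + 1) ≤ gLead N x := by
  unfold gLead
  rw [div_le_div_iff₀ (by positivity) (by positivity)]
  have hdrop : 0 ≤ N * x * (x + 1) + 2 * x + 1 := by positivity
  linear_combination hdrop

theorem gTail_add_one_le (k : ℕ) {x : K} (hx : 1 < x) : gTail k (x + 1) ≤ gTail k x := by
  unfold gTail
  have hx0 : 0 < x - 1 := sub_pos.2 hx
  rw [add_sub_cancel_right, div_le_div_iff₀ (by positivity) (by positivity)]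
  have hpow : (x - 1) ^ k ≤ x ^ k := pow_le_pow_left₀ (by linarith) (by linarith) k
  have hcube : (x + 2) * x ^ 2 ≤ (x + 1) ^ 3 := by nlinarith
  calc (x + 1 + 1) * (x ^ 2 * (x - 1) ^ k) = ((x + 2) * x ^ 2) * (x - 1) ^ k := by ring
    _ ≤ (x + 1) ^ 3 * x ^ k := mul_le_mul hcube hpow (by positivity) (by positivity)
    _ = (x + 1) * ((x + 1) ^ 2 * x ^ k) := by ring

theorem gTail_two_sub_le {x : K} (hx : 2 ≤ x) :
    gTail 2 x - gTail 2 (x + 1) ≤ gLead 3 x - gLead 3 (x + 1) := by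
  have key : gLead 3 x - gLead 3 (x + 1) + gTail 2 (x + 1) = 3 / x ^ 2 := by
    unfold gLead gTail
    have hx0 : x ≠ 0 := by positivity
    have hx1 : x + 1 ≠ 0 := by positivity
    rw [add_sub_cancel_right]
    field_simp
    ring
  suffices gTail 2 x ≤ 3 / x ^ 2 by linarith
  unfold gTail
  have hx0 : 0 < x - 1 := by linarith
  rw [div_le_div_iff₀ (by positivity) (by positivity)]
  have hquad : 0 ≤ (3 * x - 1) * (x - 2) := mul_nonneg (by linarith) (sub_nonneg.2 hx)
  nlinarith [mul_nonneg (sq_nonneg x) hquad]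

theorem gTail_succ_sub_le {k : ℕ} (hk : 1 ≤ k) {x : K} (hx : 2 ≤ x) :
    gTail (k + 1) x - gTail (k + 1) (x + 1) ≤
      gTail k x - gTail k (x + 1) + (1 / x - 1 / (x + 1)) := by
  rw [gTail_succ, gTail_succ, add_sub_cancel_right]
  have hx1 : 1 ≤ x - 1 := by linarith
  have hdrop : gTail k x / (x - 1) ≤ gTail k x :=
    div_le_self (div_nonneg (by linarith) (by positivity)) hx1
  have hsmall : gTail k (x + 1) * (x - 1) * (x + 1) ≤ 1 := by
    have hxk : x ≤ x ^ k := le_self_pow₀ (by linarith) (by omega)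
    unfold gTail
    rw [add_sub_cancel_right, div_mul_eq_mul_div, div_mul_eq_mul_div,
      div_le_one (by positivity)]
    nlinarith
  have htail : gTail k (x + 1) - gTail k (x + 1) / x ≤ 1 / x - 1 / (x + 1) := by
    have hx0 : x ≠ 0 := by positivity
    have hx1 : x + 1 ≠ 0 := by positivity
    rw [show gTail k (x + 1) - gTail k (x + 1) / x =
        gTail k (x + 1) * (x - 1) * (x + 1) / (x * (x + 1)) by field_simp,
      show 1 / x - 1 / (x + 1) = 1 / (x * (x + 1)) by field_simp; ring]
    exact div_le_div_of_nonneg_right hsmall (by positivity)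
  linarith

theorem gTail_sub_le_gLead_sub {k : ℕ} (hk : k ≠ 1) {x : K} (hx : 2 ≤ x) :
    gTail k x - gTail k (x + 1) ≤ gLead (k + 1) x - gLead (k + 1) (x + 1) := by
  obtain rfl | hk2 : k = 0 ∨ 2 ≤ k := by omega
  · simp [gTail_zero]
  clear hk
  induction k, hk2 using Nat.le_induction with
  | base => exact gTail_two_sub_le hx
  | succ k hk2 ih =>
    have hstep := gTail_succ_sub_le (by omega : 1 ≤ k) hx
    rw [gLead_succ (k + 1) (x := x) (by positivity),
      gLead_succ (k + 1) (x := x + 1) (by positivity)]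
    linarith

end

theorem g_eq_gLead_add_gTail (N : ℕ) {δ : ℕ} (hδ : δ ≠ 1) :
    g N δ = gLead N (δ : ℚ) + (-1) ^ N * gTail (N - 1) (δ : ℚ) := by
  have hδ' : (δ : ℚ) - 1 ≠ 0 := sub_ne_zero.2 (by exact_mod_cast hδ)
  rw [g, add_div, mul_div_mul_right _ _ (pow_ne_zero _ hδ'), gLead, gTail, mul_div_assoc]

theorem g_antitone_general (N : ℕ) :
    ∀ δ : ℕ, 2 ≤ δ → g N (δ + 1) ≤ g N δ := by
  intro δ hδ
  have hx : (2 : ℚ) ≤ δ := by exact_mod_cast hδ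
  rw [g_eq_gLead_add_gTail N (by omega), g_eq_gLead_add_gTail N (by omega), Nat.cast_succ]
  have hlead := gLead_add_one_le N (by linarith : (0 : ℚ) < δ)
  rcases N.even_or_odd with hN | hN
  · have htail := gTail_add_one_le (N - 1) (by linarith : (1 : ℚ) < δ)
    rw [hN.neg_one_pow]
    linarith
  · obtain ⟨m, rfl⟩ := hN
    have hdrops := gTail_sub_le_gLead_sub (by omega : 2 * m ≠ 1) hx
    rw [(odd_two_mul_add_one m).neg_one_pow, Nat.add_sub_cancel]
    linarith

/-- For every positive integer `N`, the sequence `(g_N(δ))_{δ ≥ 2}` is non-increasing. -/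
theorem g_antitone (N : ℕ) (hN : 0 < N) :
    ∀ δ : ℕ, 2 ≤ δ → g N (δ + 1) ≤ g N δ :=
  g_antitone_general N
end

section
/- If N = 2 or N ≥ 4, the sequence (g_N(δ))_{δ ∈ ℕ, δ ≥ 2} defined by g_N(δ) := ((N·δ + 1)·(δ - 1)^(N-1) + (-1)^N·(δ + 1)) / (δ^2·(δ - 1)^(N-1)) is strictly decreasing, i.e. g_N(δ + 1) < g_N(δ) for every integer δ ≥ 2. -/
open Set

section
variable {K : Type*} [Field K] [LinearOrder K] [IsStrictOrderedRing K]

def mainTerm (c x : K) : K := (c * x + 1) / x ^ 2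

def correction (m : ℕ) (x : K) : K := (x + 1) / (x ^ 2 * (x - 1) ^ m)

theorem mainTerm_strictAntiOn {c : K} (hc : 0 ≤ c) : StrictAntiOn (mainTerm c) (Ioi 0) := by
  intro x (hx : 0 < x) y (hy : 0 < y) hxy
  unfold mainTerm
  rw [div_lt_div_iff₀ (by positivity) (by positivity)]
  nlinarith [mul_pos (add_pos hx hy) (sub_pos.2 hxy),
    mul_nonneg (mul_nonneg hc (mul_pos hx hy).le) (sub_pos.2 hxy).le]

theorem mainTerm_sub_mainTerm_add_one (c : K) {x : K} (hx : 0 < x) :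
    mainTerm c x - mainTerm c (x + 1) =
      c / (x * (x + 1)) + (2 * x + 1) / (x ^ 2 * (x + 1) ^ 2) := by
  unfold mainTerm
  field_simp
  ring

theorem correction_pos (m : ℕ) {x : K} (hx : 1 < x) : 0 < correction m x := by
  have : 0 < x - 1 := sub_pos.2 hx
  unfold correction
  positivity

theorem correction_antitoneOn (m : ℕ) : AntitoneOn (correction m : K → K) (Ici 2) := by
  intro x (hx : 2 ≤ x) y (hy : 2 ≤ y) hxy
  have hx1 : 0 < x - 1 := by linarith
  have hy1 : 0 < y - 1 := by linarith
  unfold correction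
  rw [div_le_div_iff₀ (by positivity) (by positivity)]
  have hpow : (x - 1) ^ m ≤ (y - 1) ^ m := pow_le_pow_left₀ hx1.le (by linarith) m
  have hquad : (y + 1) * x ^ 2 ≤ (x + 1) * y ^ 2 := by
    nlinarith [mul_nonneg (mul_nonneg (by linarith : (0 : K) ≤ x) (by linarith : (0 : K) ≤ y))
      (sub_nonneg.2 hxy)]
  calc (y + 1) * (x ^ 2 * (x - 1) ^ m) = (y + 1) * x ^ 2 * (x - 1) ^ m := by ring
    _ ≤ (x + 1) * y ^ 2 * (y - 1) ^ m := mul_le_mul hquad hpow (by positivity) (by positivity)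
    _ = (x + 1) * (y ^ 2 * (y - 1) ^ m) := by ring

theorem correction_lt_mainTerm_sub {c : K} (hc : 5 ≤ c) {m : ℕ} (hm : 1 ≤ m) {x : K}
    (hx : 2 ≤ x) : correction m x < mainTerm c x - mainTerm c (x + 1) := by
  have hx0 : 0 < x := by linarith
  have hx1 : 0 < x - 1 := by linarith
  have hpow : x - 1 ≤ (x - 1) ^ m := le_self_pow₀ (by linarith) (by omega)
  have hkey : (x + 1) ^ 2 < c * (x * (x - 1)) := by
    nlinarith [mul_le_mul_of_nonneg_right hc (by nlinarith : (0 : K) ≤ x * (x - 1))]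
  calc correction m x ≤ (x + 1) / (x ^ 2 * (x - 1)) := by
        unfold correction
        gcongr
    _ < c / (x * (x + 1)) := by
        rw [div_lt_div_iff₀ (by positivity) (by positivity)]
        nlinarith [mul_lt_mul_of_pos_left hkey hx0]
    _ ≤ mainTerm c x - mainTerm c (x + 1) := by
        rw [mainTerm_sub_mainTerm_add_one c hx0]
        exact le_add_of_nonneg_right (by positivity)

end

theorem g_eq (N : ℕ) {δ : ℕ} (hδ : δ ≠ 1) :
    g N δ = mainTerm (N : ℚ) δ + (-1) ^ N * correction (N - 1) (δ : ℚ) := by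
  have : ((δ : ℚ) - 1) ^ (N - 1) ≠ 0 := pow_ne_zero _ (sub_ne_zero.2 (by exact_mod_cast hδ))
  unfold g mainTerm correction
  rw [add_div, mul_div_mul_right _ _ this, mul_div_assoc]

/-- If `N = 2` or `N ≥ 4`, the sequence `(g_N(δ))_{δ ≥ 2}` is strictly decreasing. -/
theorem g_strictAnti (N : ℕ) (hN : N = 2 ∨ 4 ≤ N) :
    ∀ δ : ℕ, 2 ≤ δ → g N (δ + 1) < g N δ := by
  intro δ hδ
  have hx : (2 : ℚ) ≤ δ := by exact_mod_cast hδ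
  rw [g_eq N (by omega), g_eq N (by omega)]
  push_cast
  have hmain : mainTerm (N : ℚ) (δ + 1) < mainTerm (N : ℚ) δ :=
    mainTerm_strictAntiOn N.cast_nonneg (show (0 : ℚ) < δ by linarith)
      (show (0 : ℚ) < δ + 1 by linarith) (lt_add_one _)
  rcases N.even_or_odd with hev | hodd
  · rw [hev.neg_one_pow, one_mul, one_mul]
    exact add_lt_add_of_lt_of_le hmain
      (correction_antitoneOn _ hx (show (2 : ℚ) ≤ δ + 1 by linarith) (by linarith))
  · have hN5 : 5 ≤ N := by rcases hodd with ⟨k, rfl⟩; omega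
    rw [hodd.neg_one_pow, neg_one_mul, neg_one_mul]
    have hbound := correction_lt_mainTerm_sub (show (5 : ℚ) ≤ N by exact_mod_cast hN5)
      (show 1 ≤ N - 1 by omega) hx
    have hpos := correction_pos (N - 1) (show (1 : ℚ) < δ + 1 by linarith)
    linarith
end

section
/- For every integer N ≥ 2 and every real number δ ≥ 3, one has (N·δ + 2)·(δ - 1)^N + (-1)^N·(N·δ^2 + N·δ − 2) ≥ N·δ^2·(δ − 3) + 2·δ·(δ − 2) + 4 > 0; consequently the real function g_N, defined on (1, +∞) by g_N(δ) := ((N·δ + 1)·(δ - 1)^(N-1) + (-1)^N·(δ + 1)) / (δ^2·(δ - 1)^(N-1)), is strictly decreasing on the interval [3, +∞). -/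
/-- The real function `g_N` from the paper, defined on `(1, +∞)`. -/
noncomputable def gR (N : ℕ) (δ : ℝ) : ℝ :=
  (((N : ℝ) * δ + 1) * (δ - 1) ^ (N - 1) + (-1) ^ N * (δ + 1)) /
    (δ ^ 2 * (δ - 1) ^ (N - 1))

lemma gR_hasDerivAt (m : ℕ) (δ : ℝ) (hδ : 3 ≤ δ) :
    HasDerivAt (gR (m + 2))
      ((((m + 2 : ℝ) * (δ - 1) ^ (m + 1) + ((m + 2 : ℝ) * δ + 1) * ((m + 1 : ℝ) * (δ - 1) ^ m * 1)
            + (-1) ^ (m + 2) * 1) * (δ ^ 2 * (δ - 1) ^ (m + 1))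
          - (((m + 2 : ℝ) * δ + 1) * (δ - 1) ^ (m + 1) + (-1) ^ (m + 2) * (δ + 1))
            * ((2 : ℕ) * δ ^ 1 * (δ - 1) ^ (m + 1)
               + δ ^ 2 * ((m + 1 : ℝ) * (δ - 1) ^ m * 1)))
        / (δ ^ 2 * (δ - 1) ^ (m + 1)) ^ 2) δ := by
  have h0 : HasDerivAt (fun x : ℝ => x - 1) 1 δ := (hasDerivAt_id δ).sub_const 1
  have hpow : HasDerivAt (fun x : ℝ => (x - 1) ^ (m + 1))
      ((m + 1 : ℝ) * (δ - 1) ^ m * 1) δ := by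
    simpa [Pi.pow_def] using h0.pow (m + 1)
  have hlin : HasDerivAt (fun x : ℝ => (m + 2 : ℝ) * x + 1) ((m + 2 : ℝ) * 1) δ :=
    ((hasDerivAt_id δ).const_mul _).add_const 1
  have hA : HasDerivAt
      (fun x : ℝ => ((m + 2 : ℝ) * x + 1) * (x - 1) ^ (m + 1) + (-1) ^ (m + 2) * (x + 1))
      ((m + 2 : ℝ) * (δ - 1) ^ (m + 1) + ((m + 2 : ℝ) * δ + 1) * ((m + 1 : ℝ) * (δ - 1) ^ m * 1)
        + (-1) ^ (m + 2) * 1) δ := by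
    have := (hlin.mul hpow).add (((hasDerivAt_id δ).add_const 1).const_mul ((-1 : ℝ) ^ (m + 2)))
    simpa [Pi.mul_def, Pi.add_def, mul_comm, mul_assoc, mul_left_comm] using this
  have hB : HasDerivAt (fun x : ℝ => x ^ 2 * (x - 1) ^ (m + 1))
      ((2 : ℕ) * δ ^ 1 * (δ - 1) ^ (m + 1) + δ ^ 2 * ((m + 1 : ℝ) * (δ - 1) ^ m * 1)) δ :=
    (hasDerivAt_pow 2 δ).mul hpow
  have hBne : δ ^ 2 * (δ - 1) ^ (m + 1) ≠ 0 := by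
    have h1 : (0 : ℝ) < δ - 1 := by linarith
    have h2 : (0 : ℝ) < δ := by linarith
    positivity
  have := hA.div hB hBne
  have hg : gR (m + 2) = fun x : ℝ =>
      (((m + 2 : ℝ) * x + 1) * (x - 1) ^ (m + 1) + (-1) ^ (m + 2) * (x + 1))
        / (x ^ 2 * (x - 1) ^ (m + 1)) := by
    funext x
    simp only [gR]
    push_cast
    norm_num
  rw [hg]
  exact this

/-- For `N ≥ 2` and real `δ ≥ 3`, the numerator of `-g_N'(δ)` is bounded below by
`N δ² (δ - 3) + 2 δ (δ - 2) + 4 > 0`; consequently `g_N` is strictly decreasing on `[3, +∞)`. -/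
theorem gR_strictAntiOn (N : ℕ) (hN : 2 ≤ N) :
    (∀ δ : ℝ, 3 ≤ δ →
      ((N : ℝ) * δ + 2) * (δ - 1) ^ N + (-1) ^ N * ((N : ℝ) * δ ^ 2 + (N : ℝ) * δ - 2) ≥
          (N : ℝ) * δ ^ 2 * (δ - 3) + 2 * δ * (δ - 2) + 4 ∧
        (N : ℝ) * δ ^ 2 * (δ - 3) + 2 * δ * (δ - 2) + 4 > 0) ∧
    StrictAntiOn (gR N) (Set.Ici (3 : ℝ)) := by
  obtain ⟨m, rfl⟩ : ∃ m, N = m + 2 := ⟨N - 2, by omega⟩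
  have key : ∀ δ : ℝ, 3 ≤ δ →
      ((m + 2 : ℝ) * δ + 2) * (δ - 1) ^ (m + 2)
        + (-1) ^ (m + 2) * ((m + 2 : ℝ) * δ ^ 2 + (m + 2 : ℝ) * δ - 2) ≥
          (m + 2 : ℝ) * δ ^ 2 * (δ - 3) + 2 * δ * (δ - 2) + 4 ∧
        (m + 2 : ℝ) * δ ^ 2 * (δ - 3) + 2 * δ * (δ - 2) + 4 > 0 := by
    intro δ hδ
    have hm : (0 : ℝ) ≤ (m : ℝ) := Nat.cast_nonneg m
    have hpow : (δ - 1) ^ 2 ≤ (δ - 1) ^ (m + 2) :=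
      pow_le_pow_right₀ (by linarith) (by omega)
    have hmul : ((m + 2 : ℝ) * δ + 2) * (δ - 1) ^ 2
        ≤ ((m + 2 : ℝ) * δ + 2) * (δ - 1) ^ (m + 2) :=
      mul_le_mul_of_nonneg_left hpow (by nlinarith)
    constructor
    · rcases neg_one_pow_eq_or ℝ (m + 2) with h | h <;> rw [h] <;> nlinarith
    · have h1 : (0 : ℝ) ≤ ((m : ℝ) + 2) * δ ^ 2 * (δ - 3) :=
        mul_nonneg (by positivity) (by linarith)
      nlinarith [h1]
  refine ⟨fun δ hδ => by exact_mod_cast key δ hδ, ?_⟩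
  have hderiv : ∀ δ ∈ interior (Set.Ici (3 : ℝ)), deriv (gR (m + 2)) δ < 0 := by
    intro δ hδ
    rw [interior_Ici] at hδ
    have hδ3 : (3 : ℝ) ≤ δ := le_of_lt hδ
    have hd := gR_hasDerivAt m δ hδ3
    rw [hd.deriv]
    set E : ℝ := ((m + 2 : ℝ) * δ + 2) * (δ - 1) ^ (m + 2)
        + (-1) ^ (m + 2) * ((m + 2 : ℝ) * δ ^ 2 + (m + 2 : ℝ) * δ - 2) with hE
    have hEpos : 0 < E := lt_of_lt_of_le (key δ hδ3).2 (key δ hδ3).1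
    have hnum : (((m + 2 : ℝ) * (δ - 1) ^ (m + 1)
            + ((m + 2 : ℝ) * δ + 1) * ((m + 1 : ℝ) * (δ - 1) ^ m * 1)
            + (-1) ^ (m + 2) * 1) * (δ ^ 2 * (δ - 1) ^ (m + 1))
          - (((m + 2 : ℝ) * δ + 1) * (δ - 1) ^ (m + 1) + (-1) ^ (m + 2) * (δ + 1))
            * ((2 : ℕ) * δ ^ 1 * (δ - 1) ^ (m + 1)
               + δ ^ 2 * ((m + 1 : ℝ) * (δ - 1) ^ m * 1)))
        = -(E * (δ * (δ - 1) ^ m)) := by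
      rw [hE]
      push_cast
      ring
    rw [hnum]
    have hδ1 : (0 : ℝ) < δ - 1 := by linarith
    have hδ0 : (0 : ℝ) < δ := by linarith
    have hden : (0 : ℝ) < (δ ^ 2 * (δ - 1) ^ (m + 1)) ^ 2 := by positivity
    apply div_neg_of_neg_of_pos _ hden
    have : 0 < E * (δ * (δ - 1) ^ m) := by
      apply mul_pos hEpos
      positivity
    linarith
  have hcont : ContinuousOn (gR (m + 2)) (Set.Ici (3 : ℝ)) := fun δ hδ =>
    (gR_hasDerivAt m δ hδ).continuousAt.continuousWithinAt
  exact StrictAntiOn.mono (strictAntiOn_of_deriv_neg (convex_Ici 3) hcont hderiv) le_rfl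
end

section
/- For every integer N ≥ 2, one has the identity g_N(2) − g_N(3) = (2^(N-2)·(6·N + 5 + 27·(-1)^N) − 8·(-1)^N) / (9·2^N) in ℚ; moreover g_N(2) − g_N(3) ≥ 0, with equality if and only if N = 3. -/
lemma g_add_two_two_sub_g_add_two_three (m : ℕ) :
    g (m + 2) 2 - g (m + 2) 3 =
      ((2 : ℚ) ^ m * (6 * m + 17 + 27 * (-1) ^ m) - 8 * (-1) ^ m) / (9 * 2 ^ (m + 2)) := by
  simp only [g]
  push_cast
  field_simp
  ring

lemma two_pow_mul_sub_neg_one_pow_pos {m : ℕ} (hm : m ≠ 1) :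
    0 < (2 : ℚ) ^ m * (6 * m + 17 + 27 * (-1) ^ m) - 8 * (-1) ^ m := by
  have hm0 : (0 : ℚ) ≤ m := m.cast_nonneg
  rcases m.even_or_odd with hev | hodd
  · have h1 : (1 : ℚ) ≤ 2 ^ m := one_le_pow₀ (by norm_num)
    rw [hev.neg_one_pow]
    nlinarith
  · have hm3 : 3 ≤ m := by obtain ⟨k, rfl⟩ := hodd; omega
    have h8 : (8 : ℚ) ≤ 2 ^ m :=
      calc (8 : ℚ) = 2 ^ 3 := by norm_num
        _ ≤ 2 ^ m := pow_le_pow_right₀ (by norm_num) hm3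
    have hm3' : (3 : ℚ) ≤ m := by exact_mod_cast hm3
    rw [hodd.neg_one_pow]
    nlinarith

lemma g_two_sub_g_three_pos {m : ℕ} (hm : m ≠ 1) : 0 < g (m + 2) 2 - g (m + 2) 3 := by
  rw [g_add_two_two_sub_g_add_two_three]
  exact div_pos (two_pow_mul_sub_neg_one_pow_pos hm) (by positivity)

/-- For `N ≥ 2`, `g_N(2) - g_N(3) = (2^(N-2) (6N + 5 + 27 (-1)^N) - 8 (-1)^N) / (9 · 2^N)`,
this difference is nonnegative, and it vanishes if and only if `N = 3`. -/
theorem g_two_sub_g_three (N : ℕ) (hN : 2 ≤ N) :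
    g N 2 - g N 3 =
        ((2 : ℚ) ^ (N - 2) * (6 * (N : ℚ) + 5 + 27 * (-1) ^ N) - 8 * (-1) ^ N) / (9 * 2 ^ N) ∧
      0 ≤ g N 2 - g N 3 ∧ (g N 2 - g N 3 = 0 ↔ N = 3) := by
  obtain ⟨m, rfl⟩ := Nat.exists_eq_add_of_le' hN
  have hzero : g 3 2 - g 3 3 = 0 := by norm_num [g]
  refine ⟨?_, ?_, ?_⟩
  · rw [g_add_two_two_sub_g_add_two_three, Nat.add_sub_cancel]
    push_cast
    ring
  · rcases eq_or_ne m 1 with rfl | hm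
    · exact hzero.ge
    · exact (g_two_sub_g_three_pos hm).le
  · refine ⟨fun h => ?_, fun h => by rwa [h]⟩
    by_contra hne
    exact (g_two_sub_g_three_pos (m := m) (by omega)).ne' h
end

section
/- For all integers N ≥ 1 and δ ≥ 2, the rational number w_{N,δ} := (δ - 1)·((N·δ + 1)·(δ - 1)^(N-1) + (-1)^N·(δ + 1)) / (12·δ^2) satisfies the inequality w_{N,δ} ≤ ((δ - 1)^N / 48)·(2·N + 1 + 3·(-1)^N), and equality holds if and only if N = 1, or δ = 2, or (N = 3 and δ = 3). -/
/-- The rational number `w_{N,δ}` from the paper. -/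
def w (N δ : ℕ) : ℚ :=
  ((δ : ℚ) - 1) * (((N : ℚ) * δ + 1) * ((δ : ℚ) - 1) ^ (N - 1) + (-1) ^ N * ((δ : ℚ) + 1)) /
    (12 * (δ : ℚ) ^ 2)

/-!
Multiplied by `12 δ² / (δ - 1)`, the difference of the two sides becomes a polynomial in `δ`
and `(δ - 1)^N` whose shape depends on the parity of `N`. For even `N` it is a sum of two
nonnegative terms, the second positive unless `δ = 2`. For odd `N = 2k + 1` it is
`(k δ (δ - 2) - (δ + 1)) (δ - 1)^{2k} + δ + 1`, which is positive as soon as its leading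
coefficient is. For integral `δ ≥ 2` that coefficient is positive except when `k = 0`, `δ = 2`
or `(k, δ) = (1, 3)`, and in these three cases the polynomial vanishes. Integrality is needed:
for `2 < δ < 3` and `N = 3` the inequality fails.
-/

theorem le_and_eq_iff_of_sub_eq_mul {α : Type*} [Ring α] [LinearOrder α] [IsStrictOrderedRing α]
    {a b c g : α} {P : Prop} (hsub : b - a = c * g) (hc : 0 < c) (hg : 0 ≤ g) (hg0 : g = 0 ↔ P) :
    a ≤ b ∧ (a = b ↔ P) := by
  refine ⟨sub_nonneg.1 (hsub ▸ mul_nonneg hc.le hg), ?_⟩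
  rw [← hg0, eq_comm, ← sub_eq_zero, hsub, mul_eq_zero, or_iff_right hc.ne']

def wBound (N δ : ℕ) : ℚ := (((δ : ℚ) - 1) ^ N / 48) * (2 * (N : ℚ) + 1 + 3 * (-1) ^ N)

section Gap

variable {α : Type*}

def evenGap [CommRing α] (k : ℕ) (δ : α) : α :=
  (k + 1) * δ * (δ - 2) * (δ - 1) ^ (2 * k + 1) + (δ + 1) * ((δ - 1) ^ (2 * k + 2) - 1)

def oddGap [CommRing α] (k : ℕ) (δ : α) : α :=
  (k * δ * (δ - 2) - (δ + 1)) * (δ - 1) ^ (2 * k) + (δ + 1)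

variable [CommRing α] [LinearOrder α] [IsStrictOrderedRing α]

theorem evenGap_nonneg {δ : α} (hδ : 2 ≤ δ) (k : ℕ) : 0 ≤ evenGap k δ := by
  have h2 : 0 ≤ δ - 2 := by linarith
  have h1 : 0 ≤ δ - 1 := by linarith
  have hpow : 1 ≤ (δ - 1) ^ (2 * k + 2) := one_le_pow₀ (by linarith)
  exact add_nonneg (by positivity) (mul_nonneg (by linarith) (sub_nonneg.2 hpow))

theorem evenGap_eq_zero_iff {δ : α} (hδ : 2 ≤ δ) (k : ℕ) : evenGap k δ = 0 ↔ δ = 2 := by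
  refine ⟨fun h ↦ ?_, fun h ↦ by norm_num [evenGap, h]⟩
  by_contra hne
  have h2 : 0 < δ - 2 := sub_pos.2 (lt_of_le_of_ne hδ (Ne.symm hne))
  have h1 : 0 < δ - 1 := by linarith
  have hpow : 1 < (δ - 1) ^ (2 * k + 2) := one_lt_pow₀ (by linarith) (by omega)
  have hfirst : 0 < (k + 1) * δ * (δ - 2) * (δ - 1) ^ (2 * k + 1) := by positivity
  have hsecond : 0 < (δ + 1) * ((δ - 1) ^ (2 * k + 2) - 1) := mul_pos (by linarith) (by linarith)
  rw [evenGap] at h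
  linarith

theorem add_one_lt_mul_mul_sub_two {k δ : ℕ} (hk : 1 ≤ k) (hδ : 3 ≤ δ) (h : ¬(k = 1 ∧ δ = 3)) :
    (δ + 1 : α) < k * δ * (δ - 2) := by
  have hδ' : (3 : α) ≤ δ := by exact_mod_cast hδ
  rcases (by omega : k = 1 ∧ 4 ≤ δ ∨ 2 ≤ k) with ⟨rfl, h4⟩ | h2
  · have hδ4 : (4 : α) ≤ δ := by exact_mod_cast h4
    push_cast
    nlinarith
  · have hk2 : (2 : α) ≤ k := by exact_mod_cast h2
    have hδδ : (3 : α) ≤ δ * (δ - 2) := by nlinarith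
    nlinarith

theorem oddGap_nonneg_and_eq_zero_iff {δ : ℕ} (hδ : 2 ≤ δ) (k : ℕ) :
    0 ≤ oddGap k (δ : α) ∧ (oddGap k (δ : α) = 0 ↔ k = 0 ∨ δ = 2 ∨ (k = 1 ∧ δ = 3)) := by
  by_cases h : k = 0 ∨ δ = 2 ∨ (k = 1 ∧ δ = 3)
  · have h0 : oddGap k (δ : α) = 0 := by
      rcases h with rfl | rfl | ⟨rfl, rfl⟩ <;> norm_num [oddGap]
    exact ⟨h0.ge, iff_of_true h0 h⟩
  · have hc := add_one_lt_mul_mul_sub_two (α := α) (k := k) (δ := δ)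
      (by omega) (by omega) (by tauto)
    have hδ' : (2 : α) ≤ δ := by exact_mod_cast hδ
    have hpow : 0 < ((δ : α) - 1) ^ (2 * k) := pow_pos (by linarith) _
    have hpos : 0 < oddGap k (δ : α) := add_pos (mul_pos (sub_pos.2 hc) hpow) (by positivity)
    exact ⟨hpos.le, iff_of_false hpos.ne' h⟩

end Gap

theorem wBound_sub_w_of_even (k δ : ℕ) (hδ : δ ≠ 0) :
    wBound (2 * (k + 1)) δ - w (2 * (k + 1)) δ =
      ((δ : ℚ) - 1) / (12 * δ ^ 2) * evenGap k (δ : ℚ) := by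
  have hsign : (-1 : ℚ) ^ (2 * (k + 1)) = 1 := (even_two_mul _).neg_one_pow
  simp only [wBound, w, evenGap, hsign, show 2 * (k + 1) - 1 = 2 * k + 1 by omega]
  field_simp
  push_cast
  ring

theorem wBound_sub_w_of_odd (k δ : ℕ) (hδ : δ ≠ 0) :
    wBound (2 * k + 1) δ - w (2 * k + 1) δ =
      ((δ : ℚ) - 1) / (12 * δ ^ 2) * oddGap k (δ : ℚ) := by
  have hsign : (-1 : ℚ) ^ (2 * k + 1) = -1 := (odd_two_mul_add_one _).neg_one_pow
  simp only [wBound, w, oddGap, hsign, Nat.add_sub_cancel]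
  field_simp
  push_cast
  ring

/-- For `N ≥ 1` and `δ ≥ 2`, `w_{N,δ} ≤ ((δ-1)^N / 48) (2N + 1 + 3 (-1)^N)`, with equality
if and only if `N = 1`, or `δ = 2`, or `N = 3` and `δ = 3`. -/
theorem w_le (N δ : ℕ) (hN : 1 ≤ N) (hδ : 2 ≤ δ) :
    w N δ ≤ (((δ : ℚ) - 1) ^ N / 48) * (2 * (N : ℚ) + 1 + 3 * (-1) ^ N) ∧
      (w N δ = (((δ : ℚ) - 1) ^ N / 48) * (2 * (N : ℚ) + 1 + 3 * (-1) ^ N) ↔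
        N = 1 ∨ δ = 2 ∨ (N = 3 ∧ δ = 3)) := by
  change w N δ ≤ wBound N δ ∧ (w N δ = wBound N δ ↔ _)
  have hδ' : (2 : ℚ) ≤ δ := by exact_mod_cast hδ
  have hc : 0 < ((δ : ℚ) - 1) / (12 * δ ^ 2) := div_pos (by linarith) (by positivity)
  rcases Nat.even_or_odd' N with ⟨k, rfl | rfl⟩
  · obtain ⟨k, rfl⟩ : ∃ j, k = j + 1 := ⟨k - 1, by omega⟩
    refine le_and_eq_iff_of_sub_eq_mul (wBound_sub_w_of_even k δ (by omega)) hc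
      (evenGap_nonneg hδ' k) ((evenGap_eq_zero_iff hδ' k).trans ?_)
    norm_cast
    omega
  · obtain ⟨hg, hg0⟩ := oddGap_nonneg_and_eq_zero_iff (α := ℚ) hδ k
    exact le_and_eq_iff_of_sub_eq_mul (wBound_sub_w_of_odd k δ (by omega)) hc hg
      (hg0.trans (by omega))
end

section
/- For all integers N ≥ 2 and d ≥ 3 with (N, d) ≠ (3, 3), the rational number F_stab(d, N) is positive; moreover F_stab(3, 3) = 0. -/
/-!
Everything is decided by the factor `B` that multiplies the positive constant `(N + 1) / (24 d²)`.
For `N = 3` it factors as `2 d² (d - 1)(d - 2)(d - 3)`, so `F_stab(d, 3) = (d - 1)(d - 2)(d - 3) / 3`,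
which vanishes at `d = 3` and is positive beyond. For odd `N ≥ 5` both summands of `B` are already
positive. For even `N` the coefficient of `(d - 1)^N` exceeds the subtracted term `2 (d² - 1)` by
`d N (d - 2)`, and `(d - 1)^N ≥ 1`.
-/

/-- The rational number `F_stab(d, N)` from the paper. -/
def Fstab (d N : ℕ) : ℚ :=
  if Odd N then
    ((N : ℚ) + 1) / (24 * (d : ℚ) ^ 2) *
      (((d : ℚ) - 1) ^ N * ((d : ℚ) ^ 2 * N - (d : ℚ) ^ 2 - 2 * d * N - 2) +
        2 * ((d : ℚ) ^ 2 - 1))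
  else
    ((N : ℚ) + 1) / (24 * (d : ℚ) ^ 2) *
      (((d : ℚ) - 1) ^ N * ((d : ℚ) ^ 2 * N + 2 * (d : ℚ) ^ 2 - 2 * d * N - 2) -
        2 * ((d : ℚ) ^ 2 - 1))

theorem Fstab_three {d : ℕ} (hd : d ≠ 0) :
    Fstab d 3 = ((d : ℚ) - 1) * ((d : ℚ) - 2) * ((d : ℚ) - 3) / 3 := by
  have hd' : (d : ℚ) ≠ 0 := by exact_mod_cast hd
  rw [Fstab, if_pos (by decide)]
  field_simp
  ring

theorem Fstab_pos_of_odd {d N : ℕ} (hd : 3 ≤ d) (hN : 5 ≤ N) (hodd : Odd N) : 0 < Fstab d N := by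
  have hx : (3 : ℚ) ≤ d := by exact_mod_cast hd
  have hn : (5 : ℚ) ≤ N := by exact_mod_cast hN
  have hcoeff : 0 < (d : ℚ) ^ 2 * N - (d : ℚ) ^ 2 - 2 * d * N - 2 := by
    nlinarith [mul_nonneg (sub_nonneg.2 hx) (sub_nonneg.2 hn),
      mul_nonneg (mul_nonneg (sub_nonneg.2 hx) (sub_nonneg.2 hx)) (sub_nonneg.2 hn)]
  rw [Fstab, if_pos hodd]
  refine mul_pos (by positivity) (add_pos (mul_pos (pow_pos (by linarith) N) hcoeff) ?_)
  nlinarith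

theorem Fstab_pos_of_even {d N : ℕ} (hd : 3 ≤ d) (hN : N ≠ 0) (heven : Even N) :
    0 < Fstab d N := by
  have hx : (3 : ℚ) ≤ d := by exact_mod_cast hd
  have hn : (1 : ℚ) ≤ N := by exact_mod_cast Nat.one_le_iff_ne_zero.2 hN
  have hcoeff : (d : ℚ) ^ 2 * N + 2 * (d : ℚ) ^ 2 - 2 * d * N - 2
      = 2 * ((d : ℚ) ^ 2 - 1) + d * N * (d - 2) := by ring
  have hsurplus : 0 < (d : ℚ) * N * (d - 2) := mul_pos (by positivity) (by linarith)
  have hpow : 1 ≤ ((d : ℚ) - 1) ^ N := one_le_pow₀ (by linarith)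
  have hgrowth := le_mul_of_one_le_left
    (b := 2 * ((d : ℚ) ^ 2 - 1) + d * N * (d - 2)) (by nlinarith) hpow
  rw [Fstab, if_neg (Nat.not_odd_iff_even.2 heven), hcoeff]
  exact mul_pos (by positivity) (by linarith)

/-- For `N ≥ 2` and `d ≥ 3` with `(N, d) ≠ (3, 3)`, `F_stab(d, N) > 0`;
moreover `F_stab(3, 3) = 0`. -/
theorem Fstab_pos :
    (∀ N d : ℕ, 2 ≤ N → 3 ≤ d → (N, d) ≠ (3, 3) → 0 < Fstab d N) ∧ Fstab 3 3 = 0 := by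
  refine ⟨fun N d hN hd hne => ?_, by rw [Fstab_three three_ne_zero]; norm_num⟩
  rcases Nat.even_or_odd N with heven | hodd
  · exact Fstab_pos_of_even hd (by omega) heven
  obtain rfl | hN5 : N = 3 ∨ 5 ≤ N := by
    obtain ⟨k, rfl⟩ := hodd
    omega
  · have hd4 : (4 : ℚ) ≤ d := by
      have : d ≠ 3 := fun h => hne (by rw [h])
      exact_mod_cast (show 4 ≤ d by omega)
    rw [Fstab_three (by omega)]
    apply div_pos _ three_pos
    apply mul_pos (mul_pos _ _) <;> linarith
  · exact Fstab_pos_of_odd hd hN5 hodd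
end

section
/- For all positive integers N and δ, the integer δ^2 divides (N·δ + 1)·(δ - 1)^(N-1) + (-1)^N·(δ + 1); consequently 12·w_{N,δ} is an integer, i.e. w_{N,δ} lies in (1/12)·ℤ. -/
lemma key_dvd (δ : ℕ) : ∀ n : ℕ,
    ((δ : ℤ) ^ 2 ∣ (((n : ℤ) + 1) * δ + 1) * ((δ : ℤ) - 1) ^ n + (-1) ^ (n + 1) * ((δ : ℤ) + 1))
  | 0 => ⟨0, by ring⟩
  | (n + 1) => by
    obtain ⟨j, hj⟩ := key_dvd δ n
    obtain ⟨k, hk⟩ : (δ : ℤ) ∣ ((δ : ℤ) - 1) ^ (n + 1) - (-1) ^ (n + 1) := by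
      simpa using sub_dvd_pow_sub_pow ((δ : ℤ) - 1) (-1) (n + 1)
    refine ⟨((δ : ℤ) - 1) * j + k + (-1) ^ n, ?_⟩
    push_cast
    linear_combination ((δ : ℤ) - 1) * hj + (δ : ℤ) * hk

/-- For all positive integers `N` and `δ`, the integer `δ²` divides
`(Nδ + 1)(δ-1)^(N-1) + (-1)^N (δ+1)`; consequently `12 w_{N,δ}` is an integer. -/
theorem w_twelve_int (N δ : ℕ) (hN : 0 < N) (hδ : 0 < δ) :
    ((δ : ℤ) ^ 2 ∣ ((N : ℤ) * δ + 1) * ((δ : ℤ) - 1) ^ (N - 1) + (-1) ^ N * ((δ : ℤ) + 1)) ∧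
      ∃ m : ℤ, 12 * w N δ = (m : ℚ) := by
  have hsucc : N - 1 + 1 = N := Nat.succ_pred_eq_of_pos hN
  have hdvd : (δ : ℤ) ^ 2 ∣ ((N : ℤ) * δ + 1) * ((δ : ℤ) - 1) ^ (N - 1) + (-1) ^ N * ((δ : ℤ) + 1) := by
    have := key_dvd δ (N - 1)
    rw [hsucc] at this
    have hc : (((N - 1 : ℕ) : ℤ) + 1) = (N : ℤ) := by
      rw [← hsucc]; push_cast; ring
    rwa [hc] at this
  refine ⟨hdvd, ?_⟩
  obtain ⟨k, hk⟩ := hdvd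
  refine ⟨((δ : ℤ) - 1) * k, ?_⟩
  have hδQ : (δ : ℚ) ≠ 0 := by exact_mod_cast hδ.ne'
  have hkQ : ((N : ℚ) * δ + 1) * ((δ : ℚ) - 1) ^ (N - 1) + (-1) ^ N * ((δ : ℚ) + 1)
      = (δ : ℚ) ^ 2 * (k : ℚ) := by exact_mod_cast congrArg (fun x : ℤ => (x : ℚ)) hk
  rw [w, hkQ]
  push_cast
  field_simp
end

section
/- For all integers N ≥ 1 and d ≥ 2, the rational number 12·F_stab(d, N) is an integer, i.e. F_stab(d, N) lies in (1/12)·ℤ. Equivalently, 2·d^2 divides (N + 1)·((d - 1)^N·(d^2·N − d^2 − 2·d·N − 2) + 2·(d^2 − 1)) when N is odd, and 2·d^2 divides (N + 1)·((d - 1)^N·(d^2·N + 2·d^2 − 2·d·N − 2) − 2·(d^2 − 1)) when N is even. -/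
/-!
Only the binomial expansion `(d - 1)^N ≡ (-1)^N (1 - N d) (mod d^2)` is needed. Substituting it,
the constant and linear terms of each bracket cancel, so `d^2` divides the bracket. For odd `N`
the remaining factor `2` comes from `N + 1`; for even `N` every coefficient of the quotient by
`d^2` turns out to be even, whatever the higher-order terms of the expansion are.
-/

theorem exists_one_sub_pow_eq {R : Type*} [CommRing R] (x : R) (n : ℕ) :
    ∃ t : R, (1 - x) ^ n = 1 - n * x + x ^ 2 * t := by
  obtain ⟨t, ht⟩ := sq_dvd_add_pow_sub_sub (-x) 1 n
  rw [one_pow, one_pow, neg_sq, ← sub_eq_add_neg] at ht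
  exact ⟨t, by linear_combination ht⟩

theorem sq_dvd_Fstab_numerator_of_odd (d : ℤ) {N : ℕ} (hN : Odd N) :
    d ^ 2 ∣ (d - 1) ^ N * (d ^ 2 * N - d ^ 2 - 2 * d * N - 2) + 2 * (d ^ 2 - 1) := by
  obtain ⟨t, ht⟩ := exists_one_sub_pow_eq d N
  have h : (d - 1) ^ N = N * d - 1 - d ^ 2 * t := by
    rw [← neg_sub, hN.neg_pow, ht]
    ring
  exact ⟨N ^ 2 * d - N * d - 2 * N ^ 2 - N + 3 - t * (d ^ 2 * N - d ^ 2 - 2 * d * N - 2),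
    by rw [h]; ring⟩

theorem two_mul_sq_dvd_Fstab_numerator_of_even (d : ℤ) {N : ℕ} (hN : Even N) :
    2 * d ^ 2 ∣ (d - 1) ^ N * (d ^ 2 * N + 2 * d ^ 2 - 2 * d * N - 2) - 2 * (d ^ 2 - 1) := by
  obtain ⟨t, ht⟩ := exists_one_sub_pow_eq d N
  have h : (d - 1) ^ N = 1 - N * d + d ^ 2 * t := by rw [← neg_sub, hN.neg_pow, ht]
  obtain ⟨M, rfl⟩ := hN
  rw [h]
  exact ⟨M + 4 * M ^ 2 - t - 2 * d * M * (M + 1) - 2 * t * M * d + t * (M + 1) * d ^ 2,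
    by push_cast; ring⟩

theorem exists_intCast_eq_div_of_dvd {a b : ℤ} (h : b ∣ a) : ∃ m : ℤ, (a : ℚ) / b = m := by
  obtain ⟨m, rfl⟩ := h
  rcases eq_or_ne b 0 with rfl | hb
  · exact ⟨0, by simp⟩
  · exact ⟨m, by push_cast; field_simp⟩

theorem Fstab_twelve_int_general (N d : ℕ) :
    (∃ m : ℤ, 12 * Fstab d N = (m : ℚ)) ∧
      (Odd N →
        2 * (d : ℤ) ^ 2 ∣
          ((N : ℤ) + 1) *
            (((d : ℤ) - 1) ^ N * ((d : ℤ) ^ 2 * N - (d : ℤ) ^ 2 - 2 * d * N - 2) +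
              2 * ((d : ℤ) ^ 2 - 1))) ∧
      (Even N →
        2 * (d : ℤ) ^ 2 ∣
          ((N : ℤ) + 1) *
            (((d : ℤ) - 1) ^ N * ((d : ℤ) ^ 2 * N + 2 * (d : ℤ) ^ 2 - 2 * d * N - 2) -
              2 * ((d : ℤ) ^ 2 - 1))) := by
  have hodd (h : Odd N) : 2 * (d : ℤ) ^ 2 ∣ ((N : ℤ) + 1) * _ :=
    mul_dvd_mul (by exact_mod_cast h.add_one.two_dvd) (sq_dvd_Fstab_numerator_of_odd (d : ℤ) h)
  have heven (h : Even N) :=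
    dvd_mul_of_dvd_right (two_mul_sq_dvd_Fstab_numerator_of_even (d : ℤ) h) ((N : ℤ) + 1)
  refine ⟨?_, hodd, heven⟩
  unfold Fstab
  split_ifs with h
  · obtain ⟨m, hm⟩ := exists_intCast_eq_div_of_dvd (hodd h)
    exact ⟨m, by rw [← hm]; push_cast; ring⟩
  · obtain ⟨m, hm⟩ := exists_intCast_eq_div_of_dvd (heven (Nat.not_odd_iff_even.mp h))
    exact ⟨m, by rw [← hm]; push_cast; ring⟩

/-- For `N ≥ 1` and `d ≥ 2`, `12 F_stab(d, N)` is an integer; equivalently, `2 d²` divides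
the relevant integer expression according to the parity of `N`. -/
theorem Fstab_twelve_int (N d : ℕ) (hN : 1 ≤ N) (hd : 2 ≤ d) :
    (∃ m : ℤ, 12 * Fstab d N = (m : ℚ)) ∧
      (Odd N →
        2 * (d : ℤ) ^ 2 ∣
          ((N : ℤ) + 1) *
            (((d : ℤ) - 1) ^ N * ((d : ℤ) ^ 2 * N - (d : ℤ) ^ 2 - 2 * d * N - 2) +
              2 * ((d : ℤ) ^ 2 - 1))) ∧
      (Even N →
        2 * (d : ℤ) ^ 2 ∣
          ((N : ℤ) + 1) *
            (((d : ℤ) - 1) ^ N * ((d : ℤ) ^ 2 * N + 2 * (d : ℤ) ^ 2 - 2 * d * N - 2) -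
              2 * ((d : ℤ) ^ 2 - 1))) :=
  Fstab_twelve_int_general N d
end
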